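/- Fix θ₀ ∈ ℝ^d, α > 0, and a coordinate i with the choice θ' = θ₀ + α e_i (resp. θ' = θ₀ - α e_i). Then the set of recourses x ∈ ℝ^d for which θ' minimizes ⟨θ, x⟩ over the L¹-ball {θ : ‖θ - θ₀‖₁ ≤ α} equals {x : x_i ≤ 0 and |x_i| ≥ |x_j| for all j} (resp. {x : x_i ≥ 0 and |x_i| ≥ |x_j| for all j}), and this set is a convex cone defined by finitely many linear inequalities. -/
import Mathlib

open Finset

private lemma key_iff {d : ℕ} (θ₀ x : Fin d → ℝ) {α : ℝ} (hα : 0 < α) (i : Fin d)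
    {ε : ℝ} (hε : ε = 1 ∨ ε = -1) :
    (∀ θ : Fin d → ℝ, (∑ k, |θ k - θ₀ k|) ≤ α →
        (∑ k, θ₀ k * x k) + ε * α * x i ≤ ∑ k, θ k * x k) ↔
      (ε * x i ≤ 0 ∧ ∀ j, |x j| ≤ |x i|) := by
  have habsε : |ε| = 1 := by rcases hε with h | h <;> simp [h]
  have hε2 : ε * ε = 1 := by rcases hε with h | h <;> simp [h]
  constructor
  · intro H
    have hxi : ε * x i ≤ 0 := by
      have h1 := H (fun k => θ₀ k - (if k = i then ε * α else 0)) ?_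
      · simp only [sub_mul] at h1
        rw [Finset.sum_sub_distrib] at h1
        have h2 : (∑ k, (if k = i then ε * α else 0) * x k) = ε * α * x i := by
          simp [ite_mul]
        rw [h2] at h1
        nlinarith
      · have h3 : ∀ k, |(fun k => θ₀ k - (if k = i then ε * α else 0)) k - θ₀ k|
            = if k = i then α else 0 := by
          intro k; by_cases h : k = i <;> simp [h, abs_mul, habsε, abs_of_pos hα]
        simp only [h3, Finset.sum_ite_eq', Finset.mem_univ, if_true, le_refl]
    have hxiabs : |x i| = -(ε * x i) := by
      have : |ε * x i| = -(ε * x i) := abs_of_nonpos hxi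
      rw [abs_mul, habsε, one_mul] at this
      exact this
    refine ⟨hxi, fun j => ?_⟩
    set s : ℝ := if 0 ≤ x j then -α else α with hs
    have hsabs : |s| = α := by
      by_cases h : 0 ≤ x j <;> simp [hs, h, abs_of_pos hα]
    have hsx : s * x j = -(α * |x j|) := by
      by_cases h : 0 ≤ x j
      · simp [hs, h, abs_of_nonneg h]
      · push_neg at h
        simp [hs, h, not_le.mpr h, abs_of_neg h]
    have h1 := H (fun k => θ₀ k + (if k = j then s else 0)) ?_
    · simp only [add_mul] at h1
      rw [Finset.sum_add_distrib] at h1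
      have h2 : (∑ k, (if k = j then s else 0) * x k) = s * x j := by
        simp [ite_mul]
      rw [h2, hsx] at h1
      have h4 : ε * α * x i ≤ -(α * |x j|) := by linarith
      have h5 : α * |x j| ≤ α * |x i| := by
        rw [hxiabs]; nlinarith
      exact le_of_mul_le_mul_left h5 hα
    · have h3 : ∀ k, |(fun k => θ₀ k + (if k = j then s else 0)) k - θ₀ k|
          = if k = j then α else 0 := by
        intro k; by_cases h : k = j <;> simp [h, hsabs]
      simp only [h3, Finset.sum_ite_eq', Finset.mem_univ, if_true, le_refl]
  · rintro ⟨hxi, hmax⟩ θ hθ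
    have hxiabs : |x i| = -(ε * x i) := by
      have : |ε * x i| = -(ε * x i) := abs_of_nonpos hxi
      rw [abs_mul, habsε, one_mul] at this
      exact this
    have hptwise : ∀ k, -(|θ k - θ₀ k| * |x i|) ≤ (θ k - θ₀ k) * x k := by
      intro k
      have h1 : -|(θ k - θ₀ k) * x k| ≤ (θ k - θ₀ k) * x k := neg_abs_le _
      have h2 : |(θ k - θ₀ k) * x k| = |θ k - θ₀ k| * |x k| := abs_mul _ _
      have h3 : |θ k - θ₀ k| * |x k| ≤ |θ k - θ₀ k| * |x i| :=
        mul_le_mul_of_nonneg_left (hmax k) (abs_nonneg _)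
      linarith
    have hsum : -((∑ k, |θ k - θ₀ k|) * |x i|) ≤ ∑ k, (θ k - θ₀ k) * x k := by
      rw [Finset.sum_mul] at *
      calc -(∑ k, |θ k - θ₀ k| * |x i|) = ∑ k, -(|θ k - θ₀ k| * |x i|) := by
            rw [Finset.sum_neg_distrib]
        _ ≤ ∑ k, (θ k - θ₀ k) * x k := Finset.sum_le_sum (fun k _ => hptwise k)
    have hsplit : (∑ k, (θ k - θ₀ k) * x k) = (∑ k, θ k * x k) - ∑ k, θ₀ k * x k := by
      rw [← Finset.sum_sub_distrib]; congr 1; ext k; ring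
    have hfin : ε * α * x i ≤ -(α * |x i|) + (α * |x i| + ε * α * x i) := by ring_nf; rfl
    have h6 : α * |x i| + ε * α * x i = 0 := by rw [hxiabs]; ring
    have h7 : -(α * |x i|) ≤ -((∑ k, |θ k - θ₀ k|) * |x i|) := by
      have := mul_le_mul_of_nonneg_right hθ (abs_nonneg (x i))
      linarith
    rw [hsplit] at hsum
    nlinarith [abs_nonneg (x i)]

/-- The set of recourses `x` for which `θ₀ + α e i` (resp. `θ₀ - α e i`) minimizes
`⟨θ, x⟩` over the L¹-ball around `θ₀` is `{x : x i ≤ 0 ∧ ∀ j, |x j| ≤ |x i|}`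
(resp. `{x : 0 ≤ x i ∧ ∀ j, |x j| ≤ |x i|}`), a convex cone given by linear
inequalities. -/
theorem stmt4 {d : ℕ} (θ₀ : Fin d → ℝ) (α : ℝ) (hα : 0 < α) (i : Fin d) :
    ({x : Fin d → ℝ |
        ∀ θ : Fin d → ℝ, (∑ k, |θ k - θ₀ k|) ≤ α →
          (∑ k, (θ₀ k + (if k = i then α else 0)) * x k) ≤ ∑ k, θ k * x k}
      = {x : Fin d → ℝ | x i ≤ 0 ∧ ∀ j, |x j| ≤ |x i|}) ∧
    ({x : Fin d → ℝ |
        ∀ θ : Fin d → ℝ, (∑ k, |θ k - θ₀ k|) ≤ α →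
          (∑ k, (θ₀ k - (if k = i then α else 0)) * x k) ≤ ∑ k, θ k * x k}
      = {x : Fin d → ℝ | 0 ≤ x i ∧ ∀ j, |x j| ≤ |x i|}) ∧
    Convex ℝ {x : Fin d → ℝ | x i ≤ 0 ∧ ∀ j, |x j| ≤ |x i|} ∧
    Convex ℝ {x : Fin d → ℝ | 0 ≤ x i ∧ ∀ j, |x j| ≤ |x i|} ∧
    (∀ (c : ℝ), 0 ≤ c → ∀ x ∈ {x : Fin d → ℝ | x i ≤ 0 ∧ ∀ j, |x j| ≤ |x i|},
      c • x ∈ {x : Fin d → ℝ | x i ≤ 0 ∧ ∀ j, |x j| ≤ |x i|}) ∧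
    (∀ (c : ℝ), 0 ≤ c → ∀ x ∈ {x : Fin d → ℝ | 0 ≤ x i ∧ ∀ j, |x j| ≤ |x i|},
      c • x ∈ {x : Fin d → ℝ | 0 ≤ x i ∧ ∀ j, |x j| ≤ |x i|}) := by
  refine ⟨?_, ?_, ?_, ?_, ?_, ?_⟩
  · ext x
    have hsum : (∑ k, (θ₀ k + (if k = i then α else 0)) * x k)
        = (∑ k, θ₀ k * x k) + (1 : ℝ) * α * x i := by
      simp only [add_mul]
      rw [Finset.sum_add_distrib]
      simp [ite_mul]
    simp only [Set.mem_setOf_eq, hsum]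
    rw [key_iff θ₀ x hα i (Or.inl rfl)]
    simp
  · ext x
    have hsum : (∑ k, (θ₀ k - (if k = i then α else 0)) * x k)
        = (∑ k, θ₀ k * x k) + (-1 : ℝ) * α * x i := by
      simp only [sub_mul]
      rw [Finset.sum_sub_distrib]
      simp [ite_mul]
      ring
    simp only [Set.mem_setOf_eq, hsum]
    rw [key_iff θ₀ x hα i (Or.inr rfl)]
    constructor
    · rintro ⟨h1, h2⟩; exact ⟨by linarith, h2⟩
    · rintro ⟨h1, h2⟩; exact ⟨by linarith, h2⟩
  · rintro x ⟨hx1, hx2⟩ y ⟨hy1, hy2⟩ a b ha hb hab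
    have hzi : a * x i + b * y i ≤ 0 := by nlinarith
    refine ⟨by simpa using hzi, fun j => ?_⟩
    have h1 : |a * x j + b * y j| ≤ a * |x j| + b * |y j| := by
      calc |a * x j + b * y j| ≤ |a * x j| + |b * y j| := abs_add_le _ _
        _ = a * |x j| + b * |y j| := by
            rw [abs_mul, abs_mul, abs_of_nonneg ha, abs_of_nonneg hb]
    have h2 : a * |x j| + b * |y j| ≤ a * |x i| + b * |y i| := by
      have := hx2 j; have := hy2 j; nlinarith
    have h3 : a * |x i| + b * |y i| = |a * x i + b * y i| := by
      rw [abs_of_nonpos hzi, abs_of_nonpos hx1, abs_of_nonpos hy1]; ring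
    simp only [Pi.add_apply, Pi.smul_apply, smul_eq_mul]
    linarith
  · rintro x ⟨hx1, hx2⟩ y ⟨hy1, hy2⟩ a b ha hb hab
    have hzi : 0 ≤ a * x i + b * y i := by nlinarith
    refine ⟨by simpa using hzi, fun j => ?_⟩
    have h1 : |a * x j + b * y j| ≤ a * |x j| + b * |y j| := by
      calc |a * x j + b * y j| ≤ |a * x j| + |b * y j| := abs_add_le _ _
        _ = a * |x j| + b * |y j| := by
            rw [abs_mul, abs_mul, abs_of_nonneg ha, abs_of_nonneg hb]
    have h2 : a * |x j| + b * |y j| ≤ a * |x i| + b * |y i| := by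
      have := hx2 j; have := hy2 j; nlinarith
    have h3 : a * |x i| + b * |y i| = |a * x i + b * y i| := by
      rw [abs_of_nonneg hzi, abs_of_nonneg hx1, abs_of_nonneg hy1]
    simp only [Pi.add_apply, Pi.smul_apply, smul_eq_mul]
    linarith
  · rintro c hc x ⟨hx1, hx2⟩
    refine ⟨by simpa using mul_nonpos_of_nonneg_of_nonpos hc hx1, fun j => ?_⟩
    simp only [Pi.smul_apply, smul_eq_mul, abs_mul, abs_of_nonneg hc]
    exact mul_le_mul_of_nonneg_left (hx2 j) hc
  · rintro c hc x ⟨hx1, hx2⟩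
    refine ⟨by simpa using mul_nonneg hc hx1, fun j => ?_⟩
    simp only [Pi.smul_apply, smul_eq_mul, abs_mul, abs_of_nonneg hc]
    exact mul_le_mul_of_nonneg_left (hx2 j) hc
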